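/- arXiv:1210.5860 — 5 statements merged into one kernel-verified Lean document; each statement's English description precedes it below -/
import Mathlib

section
/- Let 0 < R_X ≤ ∞, b > 0, and 0 < r₀ < R_X. Let f_l : [0,R_X) → [0,1] be increasing with f_l(r₀) > 0, and suppose the function r ↦ f_l(r)^{1/b} is concave on [0,r₀]. Then there exists a constant c₁ > 0 such that f_l(λ·r) ≥ c₁·λ^b·f_l(r) for every λ ∈ [0,1] and every r ∈ [0,R_X). -/
open Set ENNReal

/-- If `f_l : [0,R_X) → [0,1]` is increasing with `f_l(r₀) > 0` and `f_l^{1/b}` is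
concave on `[0,r₀]` (where `b > 0`, `0 < r₀ < R_X ≤ ∞`), then there is a constant
`c₁ > 0` with `f_l(λ·r) ≥ c₁ · λ^b · f_l(r)` for all `λ ∈ [0,1]`, `r ∈ [0,R_X)`. -/
theorem fl_scaling
    (RX : ℝ≥0∞) (hRX : 0 < RX) (b r₀ : ℝ) (hb : 0 < b)
    (hr₀ : 0 < r₀) (hr₀RX : ENNReal.ofReal r₀ < RX)
    (fl : ℝ → ℝ)
    (hfl01 : ∀ r : ℝ, 0 ≤ r → ENNReal.ofReal r < RX → fl r ∈ Set.Icc (0 : ℝ) 1)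
    (hflmono : ∀ r s : ℝ, 0 ≤ r → r ≤ s → ENNReal.ofReal s < RX → fl r ≤ fl s)
    (hflpos : 0 < fl r₀)
    (hconc : ConcaveOn ℝ (Set.Icc 0 r₀) (fun r => fl r ^ (1 / b))) :
    ∃ c₁ : ℝ, 0 < c₁ ∧ ∀ lam r : ℝ, lam ∈ Set.Icc (0 : ℝ) 1 →
      0 ≤ r → ENNReal.ofReal r < RX →
      c₁ * lam ^ b * fl r ≤ fl (lam * r) := by
  have hlt : ∀ t : ℝ, t ≤ r₀ → ENNReal.ofReal t < RX := fun t ht =>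
    lt_of_le_of_lt (ENNReal.ofReal_le_ofReal ht) hr₀RX
  -- key lemma on [0, r₀]
  have key : ∀ s : ℝ, s ∈ Set.Icc 0 r₀ → ∀ lam : ℝ, lam ∈ Set.Icc (0:ℝ) 1 →
      lam ^ b * fl s ≤ fl (lam * s) := by
    intro s hs lam hlam
    obtain ⟨hs0, hsr₀⟩ := hs
    obtain ⟨hl0, hl1⟩ := hlam
    have hfs : 0 ≤ fl s := (hfl01 s hs0 (hlt s hsr₀)).1
    have hls0 : 0 ≤ lam * s := mul_nonneg hl0 hs0
    have hlss : lam * s ≤ r₀ := le_trans (by nlinarith) hsr₀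
    have hfls : 0 ≤ fl (lam * s) := (hfl01 _ hls0 (hlt _ hlss)).1
    have hmem0 : (0:ℝ) ∈ Set.Icc 0 r₀ := ⟨le_refl 0, hr₀.le⟩
    have hmems : s ∈ Set.Icc 0 r₀ := ⟨hs0, hsr₀⟩
    have hc := hconc.2 hmems hmem0 hl0 (by linarith : (0:ℝ) ≤ 1 - lam) (by ring)
    simp only [smul_eq_mul, mul_zero, add_zero] at hc
    have hg0 : 0 ≤ fl 0 ^ (1/b) := Real.rpow_nonneg (hfl01 0 le_rfl (hlt 0 hr₀.le)).1 _
    have h1 : lam * fl s ^ (1/b) ≤ fl (lam * s) ^ (1/b) := by nlinarith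
    have h2 : 0 ≤ lam * fl s ^ (1/b) := mul_nonneg hl0 (Real.rpow_nonneg hfs _)
    calc lam ^ b * fl s = (lam * fl s ^ (1/b)) ^ b := by
          rw [Real.mul_rpow hl0 (Real.rpow_nonneg hfs _), ← Real.rpow_mul hfs,
            one_div_mul_cancel hb.ne', Real.rpow_one]
      _ ≤ (fl (lam * s) ^ (1/b)) ^ b := Real.rpow_le_rpow h2 h1 hb.le
      _ = fl (lam * s) := by
          rw [← Real.rpow_mul hfls, one_div_mul_cancel hb.ne', Real.rpow_one]
  refine ⟨fl r₀, hflpos, ?_⟩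
  intro lam r hlam hr hrRX
  have hr₀1 : fl r₀ ≤ 1 := (hfl01 r₀ hr₀.le hr₀RX).2
  have hfr : fl r ∈ Set.Icc (0:ℝ) 1 := hfl01 r hr hrRX
  have hl0 := hlam.1
  have hl1 := hlam.2
  have hlb0 : 0 ≤ lam ^ b := Real.rpow_nonneg hl0 _
  have hlb1 : lam ^ b ≤ 1 := Real.rpow_le_one hl0 hl1 hb.le
  rcases le_or_gt r r₀ with hcase | hcase
  · have hk := key r ⟨hr, hcase⟩ lam hlam
    nlinarith [hfr.1, hfr.2, mul_nonneg hlb0 hfr.1]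
  · rcases le_or_gt r₀ (lam * r) with h2 | h2
    · have hmono := hflmono r₀ (lam * r) hr₀.le h2
        (lt_of_le_of_lt (ENNReal.ofReal_le_ofReal (by nlinarith)) hrRX)
      have ha : fl r₀ * lam ^ b * fl r ≤ fl r₀ * lam ^ b := by
        nlinarith [mul_nonneg hflpos.le hlb0, hfr.1, hfr.2]
      have hb2 : fl r₀ * lam ^ b ≤ fl r₀ := by nlinarith
      linarith
    · set lam' := lam * r / r₀ with hlam'def
      have hl'0 : 0 ≤ lam' := div_nonneg (mul_nonneg hl0 hr) hr₀.le
      have hl'1 : lam' ≤ 1 := (div_le_one hr₀).2 h2.le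
      have heq : lam' * r₀ = lam * r := div_mul_cancel₀ _ hr₀.ne'
      have hk := key r₀ ⟨hr₀.le, le_refl r₀⟩ lam' ⟨hl'0, hl'1⟩
      rw [heq] at hk
      have hle : lam ≤ lam' := by
        rw [hlam'def, le_div_iff₀ hr₀]
        nlinarith
      have hlble : lam ^ b ≤ lam' ^ b := Real.rpow_le_rpow hl0 hle hb.le
      have ha : fl r₀ * lam ^ b * fl r ≤ fl r₀ * lam ^ b := by
        nlinarith [mul_nonneg hflpos.le hlb0, hfr.1, hfr.2]
      have hb2 : fl r₀ * lam ^ b ≤ lam' ^ b * fl r₀ := by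
        rw [mul_comm (lam' ^ b)]
        exact mul_le_mul_of_nonneg_left hlble hflpos.le
      linarith
end

section
/- Let 0 < R_X ≤ ∞, b > 0, and 0 < r₀ < R_X. Let f_u : [0,R_X) → [1,∞) be decreasing, and suppose the function r ↦ f_u(r)^{-1/b} is concave on [0,r₀]. Then there exists a constant c₂ > 0 such that f_u(λ·r) ≤ c₂·λ^{-b}·f_u(r) for every λ ∈ (0,1] and every r ∈ [0,R_X). -/
open Set ENNReal

/-- If `f_u : [0,R_X) → [1,∞)` is decreasing and `f_u^{-1/b}` is concave on `[0,r₀]`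
(where `b > 0`, `0 < r₀ < R_X ≤ ∞`), then there is a constant `c₂ > 0` with
`f_u(λ·r) ≤ c₂ · λ^{-b} · f_u(r)` for all `λ ∈ (0,1]`, `r ∈ [0,R_X)`. -/
theorem fu_scaling
    (RX : ℝ≥0∞) (hRX : 0 < RX) (b r₀ : ℝ) (hb : 0 < b)
    (hr₀ : 0 < r₀) (hr₀RX : ENNReal.ofReal r₀ < RX)
    (fu : ℝ → ℝ)
    (hfu1 : ∀ r : ℝ, 0 ≤ r → ENNReal.ofReal r < RX → 1 ≤ fu r)
    (hfumono : ∀ r s : ℝ, 0 ≤ r → r ≤ s → ENNReal.ofReal s < RX → fu s ≤ fu r)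
    (hconc : ConcaveOn ℝ (Set.Icc 0 r₀) (fun r => fu r ^ (-(1 / b)))) :
    ∃ c₂ : ℝ, 0 < c₂ ∧ ∀ lam r : ℝ, 0 < lam → lam ≤ 1 →
      0 ≤ r → ENNReal.ofReal r < RX →
      fu (lam * r) ≤ c₂ * lam ^ (-b) * fu r := by
  have hexp : (-(1 / b)) * (-b) = 1 := by field_simp
  -- key estimate on [0, r₀]
  have key : ∀ lam r : ℝ, 0 < lam → lam ≤ 1 → 0 ≤ r → r ≤ r₀ →
      fu (lam * r) ≤ lam ^ (-b) * fu r := by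
    intro lam r hl hl1 hr hrr
    have hrRX : ENNReal.ofReal r < RX :=
      lt_of_le_of_lt (ENNReal.ofReal_le_ofReal hrr) hr₀RX
    have hlr : lam * r ≤ r := by nlinarith
    have hlrRX : ENNReal.ofReal (lam * r) < RX :=
      lt_of_le_of_lt (ENNReal.ofReal_le_ofReal hlr) hrRX
    have hlr0 : 0 ≤ lam * r := mul_nonneg hl.le hr
    have hfur : 1 ≤ fu r := hfu1 r hr hrRX
    have hfulr : 1 ≤ fu (lam * r) := hfu1 _ hlr0 hlrRX
    have hrmem : r ∈ Set.Icc 0 r₀ := ⟨hr, hrr⟩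
    have h0mem : (0 : ℝ) ∈ Set.Icc 0 r₀ := ⟨le_refl _, hr₀.le⟩
    have hcc := hconc.2 hrmem h0mem hl.le (by linarith : (0:ℝ) ≤ 1 - lam) (by ring)
    simp only [smul_eq_mul, mul_zero, add_zero] at hcc
    have hg0 : 0 ≤ fu 0 ^ (-(1 / b)) := Real.rpow_nonneg (by
      have := hfu1 0 le_rfl (by simpa using hRX); linarith) _
    have hg : lam * (fu r ^ (-(1 / b))) ≤ fu (lam * r) ^ (-(1 / b)) := by
      nlinarith [hcc]
    have hpos : 0 < lam * (fu r ^ (-(1 / b))) :=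
      mul_pos hl (Real.rpow_pos_of_pos (by linarith) _)
    have h1 := Real.rpow_le_rpow_of_nonpos hpos hg (neg_nonpos.mpr hb.le)
    rw [Real.mul_rpow hl.le (Real.rpow_nonneg (by linarith) _),
      ← Real.rpow_mul (by linarith : (0:ℝ) ≤ fu r), hexp, Real.rpow_one,
      ← Real.rpow_mul (by linarith : (0:ℝ) ≤ fu (lam * r)), hexp, Real.rpow_one] at h1
    exact h1
  have hcr₀ : 1 ≤ fu r₀ := hfu1 r₀ hr₀.le hr₀RX
  refine ⟨fu r₀, by linarith, ?_⟩
  intro lam r hl hl1 hr hrRX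
  have hfur : 1 ≤ fu r := hfu1 r hr hrRX
  have hlpow : 1 ≤ lam ^ (-b) :=
    Real.one_le_rpow_of_pos_of_le_one_of_nonpos hl hl1 (neg_nonpos.mpr hb.le)
  have hlr : lam * r ≤ r := by nlinarith
  have hlr0 : 0 ≤ lam * r := mul_nonneg hl.le hr
  have hlrRX : ENNReal.ofReal (lam * r) < RX :=
    lt_of_le_of_lt (ENNReal.ofReal_le_ofReal hlr) hrRX
  rcases le_or_gt r r₀ with hrr | hrr
  · have hstep := key lam r hl hl1 hr hrr
    have hpos : (0:ℝ) ≤ lam ^ (-b) * fu r :=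
      mul_nonneg (Real.rpow_pos_of_pos hl _).le (by linarith)
    calc fu (lam * r) ≤ lam ^ (-b) * fu r := hstep
      _ ≤ fu r₀ * (lam ^ (-b) * fu r) := le_mul_of_one_le_left hpos hcr₀
      _ = fu r₀ * lam ^ (-b) * fu r := by ring
  · rcases le_or_gt r₀ (lam * r) with hcase | hcase
    · -- lam*r ≥ r₀ : fu(lam*r) ≤ fu r₀
      have h1 : fu (lam * r) ≤ fu r₀ := hfumono r₀ (lam * r) hr₀.le hcase hlrRX
      have h6 : (1:ℝ) ≤ lam ^ (-b) * fu r := by nlinarith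
      calc fu (lam * r) ≤ fu r₀ := h1
        _ ≤ fu r₀ * (lam ^ (-b) * fu r) := le_mul_of_one_le_right (by linarith) h6
        _ = fu r₀ * lam ^ (-b) * fu r := by ring
    · -- lam*r < r₀ : write lam*r = μ * r₀ with μ = lam*r/r₀
      set μ := lam * r / r₀ with hμdef
      have hr0 : 0 < r := lt_trans hr₀ hrr
      have hμpos : 0 < μ := div_pos (mul_pos hl hr0) hr₀
      have hμ1 : μ ≤ 1 := by
        rw [div_le_one hr₀]; linarith
      have heq : μ * r₀ = lam * r := div_mul_cancel₀ _ hr₀.ne'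
      have h1 : fu (lam * r) ≤ μ ^ (-b) * fu r₀ := by
        have := key μ r₀ hμpos hμ1 hr₀.le le_rfl
        rwa [heq] at this
      have hμsplit : μ = lam * (r / r₀) := by rw [hμdef, mul_div_assoc]
      have hrr₀1 : 1 ≤ r / r₀ := by rw [le_div_iff₀ hr₀]; linarith
      have h2 : μ ^ (-b) = lam ^ (-b) * (r / r₀) ^ (-b) := by
        rw [hμsplit, Real.mul_rpow hl.le (by positivity)]
      have h3 : (r / r₀) ^ (-b) ≤ 1 :=
        Real.rpow_le_one_of_one_le_of_nonpos hrr₀1 (neg_nonpos.mpr hb.le)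
      have h4 : 0 < lam ^ (-b) := Real.rpow_pos_of_pos hl _
      have h5 : 0 ≤ (r / r₀) ^ (-b) := Real.rpow_nonneg (by positivity) _
      calc fu (lam * r) ≤ μ ^ (-b) * fu r₀ := h1
        _ = lam ^ (-b) * (r / r₀) ^ (-b) * fu r₀ := by rw [h2]
        _ ≤ lam ^ (-b) * 1 * fu r₀ := by
            have := mul_le_mul_of_nonneg_left h3 h4.le
            nlinarith
        _ = lam ^ (-b) * fu r₀ := by ring
        _ ≤ fu r₀ * lam ^ (-b) * fu r := by nlinarith [mul_nonneg h4.le (by linarith : (0:ℝ) ≤ fu r₀), mul_nonneg (mul_nonneg (by linarith : (0:ℝ) ≤ fu r₀) h4.le) (by linarith : (0:ℝ) ≤ fu r - 1)]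
end

section
/- Let 0 < R_X ≤ ∞, b > 0, and 0 < r₀ < R_X. Let f_l : [0,R_X) → [0,1] be increasing with f_l(r₀) > 0 and with r ↦ f_l(r)^{1/b} concave on [0,r₀], and let f_u : [0,R_X) → [1,∞) be decreasing with r ↦ f_u(r)^{-1/b} concave on [0,r₀]. Define g(r) := f_l(r)/f_u(r). Then there exists a constant c₁ > 0 such that g(λ·r) ≥ c₁·λ^{2b}·g(r) for every λ ∈ (0,1] and every r ∈ [0,R_X). -/
open Set ENNReal

/-- With `f_l` increasing, `[0,1]`-valued, `f_l(r₀) > 0`, `f_l^{1/b}` concave on `[0,r₀]`,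
and `f_u` decreasing, `[1,∞)`-valued, `f_u^{-1/b}` concave on `[0,r₀]`, the ratio
`g := f_l/f_u` satisfies `g(λ·r) ≥ c₁ · λ^{2b} · g(r)` for some `c₁ > 0`, for all
`λ ∈ (0,1]` and `r ∈ [0,R_X)`. -/
theorem g_scaling
    (RX : ℝ≥0∞) (hRX : 0 < RX) (b r₀ : ℝ) (hb : 0 < b)
    (hr₀ : 0 < r₀) (hr₀RX : ENNReal.ofReal r₀ < RX)
    (fl fu : ℝ → ℝ)
    (hfl01 : ∀ r : ℝ, 0 ≤ r → ENNReal.ofReal r < RX → fl r ∈ Set.Icc (0 : ℝ) 1)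
    (hflmono : ∀ r s : ℝ, 0 ≤ r → r ≤ s → ENNReal.ofReal s < RX → fl r ≤ fl s)
    (hflpos : 0 < fl r₀)
    (hflconc : ConcaveOn ℝ (Set.Icc 0 r₀) (fun r => fl r ^ (1 / b)))
    (hfu1 : ∀ r : ℝ, 0 ≤ r → ENNReal.ofReal r < RX → 1 ≤ fu r)
    (hfumono : ∀ r s : ℝ, 0 ≤ r → r ≤ s → ENNReal.ofReal s < RX → fu s ≤ fu r)
    (hfuconc : ConcaveOn ℝ (Set.Icc 0 r₀) (fun r => fu r ^ (-(1 / b))))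
    (g : ℝ → ℝ) (hg : ∀ r : ℝ, g r = fl r / fu r) :
    ∃ c₁ : ℝ, 0 < c₁ ∧ ∀ lam r : ℝ, 0 < lam → lam ≤ 1 →
      0 ≤ r → ENNReal.ofReal r < RX →
      c₁ * lam ^ (2 * b) * g r ≤ g (lam * r) := by
  have hbne : b ≠ 0 := ne_of_gt hb
  have h0RX : ENNReal.ofReal 0 < RX := by simpa using hRX
  have hfu0 : 1 ≤ fu 0 := hfu1 0 le_rfl h0RX
  have hfu0pos : (0:ℝ) < fu 0 := lt_of_lt_of_le one_pos hfu0
  have hfl1 : fl r₀ ≤ 1 := (hfl01 r₀ hr₀.le hr₀RX).2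
  set c₁ := fl r₀ / fu 0 with hc₁
  have hc₁pos : 0 < c₁ := div_pos hflpos hfu0pos
  have hc₁le1 : c₁ ≤ 1 := (div_le_one hfu0pos).2 (le_trans hfl1 hfu0)
  have hgmem : ∀ r : ℝ, 0 ≤ r → ENNReal.ofReal r < RX → 0 ≤ g r ∧ g r ≤ 1 := by
    intro r hr hrRX
    have h1 := hfl01 r hr hrRX
    have h2 := hfu1 r hr hrRX
    have hupos : 0 < fu r := lt_of_lt_of_le one_pos h2
    rw [hg]
    exact ⟨div_nonneg h1.1 hupos.le, (div_le_one hupos).2 (le_trans h1.2 h2)⟩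
  have key : ∀ μ s : ℝ, 0 < μ → μ ≤ 1 → 0 ≤ s → s ≤ r₀ →
      μ ^ (2*b) * g s ≤ g (μ * s) := by
    intro μ s hμ hμ1 hs hsr₀
    have hsRX : ENNReal.ofReal s < RX :=
      lt_of_le_of_lt (ENNReal.ofReal_le_ofReal hsr₀) hr₀RX
    have hμs0 : 0 ≤ μ * s := mul_nonneg hμ.le hs
    have hμss : μ * s ≤ s := by nlinarith
    have hμsRX : ENNReal.ofReal (μ*s) < RX :=
      lt_of_le_of_lt (ENNReal.ofReal_le_ofReal hμss) hsRX
    have mem0 : (0:ℝ) ∈ Set.Icc (0:ℝ) r₀ := ⟨le_rfl, hr₀.le⟩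
    have mems : s ∈ Set.Icc (0:ℝ) r₀ := ⟨hs, hsr₀⟩
    have hsum : (1 - μ) + μ = 1 := by ring
    have hfl0 : 0 ≤ fl 0 := (hfl01 0 le_rfl h0RX).1
    have hfls : 0 ≤ fl s := (hfl01 s hs hsRX).1
    have hflμs : 0 ≤ fl (μ*s) := (hfl01 (μ*s) hμs0 hμsRX).1
    have h0pow : 0 ≤ fl 0 ^ (1/b) := Real.rpow_nonneg hfl0 _
    have hA : μ * fl s ^ (1/b) ≤ fl (μ*s) ^ (1/b) := by
      have h := hflconc.2 mem0 mems (by linarith : (0:ℝ) ≤ 1 - μ) hμ.le hsum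
      simp only [smul_eq_mul, mul_zero, zero_add] at h
      nlinarith [mul_nonneg (by linarith : (0:ℝ) ≤ 1-μ) h0pow]
    have hfl_scaled : μ ^ b * fl s ≤ fl (μ*s) := by
      have h := Real.rpow_le_rpow
        (mul_nonneg hμ.le (Real.rpow_nonneg hfls _)) hA hb.le
      rwa [Real.mul_rpow hμ.le (Real.rpow_nonneg hfls _),
        ← Real.rpow_mul hfls, ← Real.rpow_mul hflμs, one_div,
        inv_mul_cancel₀ hbne, Real.rpow_one, Real.rpow_one] at h
    have hfus1 : 1 ≤ fu s := hfu1 s hs hsRX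
    have hfuμs1 : 1 ≤ fu (μ*s) := hfu1 _ hμs0 hμsRX
    have hfuspos : 0 < fu s := lt_of_lt_of_le one_pos hfus1
    have hfuμspos : 0 < fu (μ*s) := lt_of_lt_of_le one_pos hfuμs1
    have hu0pow : 0 ≤ fu 0 ^ (-(1/b)) := Real.rpow_nonneg hfu0pos.le _
    have hB : μ * fu s ^ (-(1/b)) ≤ fu (μ*s) ^ (-(1/b)) := by
      have h := hfuconc.2 mem0 mems (by linarith : (0:ℝ) ≤ 1 - μ) hμ.le hsum
      simp only [smul_eq_mul, mul_zero, zero_add] at h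
      nlinarith [mul_nonneg (by linarith : (0:ℝ) ≤ 1-μ) hu0pow]
    have hexp : -(1/b) * b = -1 := by field_simp
    have hfu_scaled : μ ^ b * (fu s)⁻¹ ≤ (fu (μ*s))⁻¹ := by
      have h := Real.rpow_le_rpow
        (mul_nonneg hμ.le (Real.rpow_nonneg hfuspos.le _)) hB hb.le
      rwa [Real.mul_rpow hμ.le (Real.rpow_nonneg hfuspos.le _),
        ← Real.rpow_mul hfuspos.le, ← Real.rpow_mul hfuμspos.le, hexp,
        Real.rpow_neg_one, Real.rpow_neg_one] at h
    have h2b : μ ^ (2*b) = μ^b * μ^b := by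
      rw [two_mul, Real.rpow_add hμ]
    rw [hg, hg, div_eq_mul_inv, div_eq_mul_inv, h2b]
    calc μ^b * μ^b * (fl s * (fu s)⁻¹)
        = (μ^b * fl s) * (μ^b * (fu s)⁻¹) := by ring
      _ ≤ fl (μ*s) * (fu (μ*s))⁻¹ :=
        mul_le_mul hfl_scaled hfu_scaled
          (mul_nonneg (Real.rpow_nonneg hμ.le _) (inv_nonneg.2 hfuspos.le)) hflμs
  refine ⟨c₁, hc₁pos, ?_⟩
  intro lam r hlam hlam1 hr hrRX
  have hlr0 : 0 ≤ lam * r := mul_nonneg hlam.le hr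
  have hlrr : lam * r ≤ r := by nlinarith
  have hlrRX : ENNReal.ofReal (lam*r) < RX :=
    lt_of_le_of_lt (ENNReal.ofReal_le_ofReal hlrr) hrRX
  have hgrmem := hgmem r hr hrRX
  have hl2b_nonneg : 0 ≤ lam ^ (2*b) := Real.rpow_nonneg hlam.le _
  have hl2b_le1 : lam ^ (2*b) ≤ 1 := Real.rpow_le_one hlam.le hlam1 (by positivity)
  rcases le_or_gt r r₀ with hcase | hcase
  · have h := key lam r hlam hlam1 hr hcase
    nlinarith [hgrmem.1, mul_nonneg hl2b_nonneg hgrmem.1]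
  · rcases le_or_gt (lam * r) r₀ with hcase2 | hcase2
    · set μ := lam * r / r₀ with hμdef
      have hμpos : 0 < μ := div_pos (by nlinarith) hr₀
      have hμ1 : μ ≤ 1 := (div_le_one hr₀).2 hcase2
      have h := key μ r₀ hμpos hμ1 hr₀.le le_rfl
      have hμr₀ : μ * r₀ = lam * r := div_mul_cancel₀ _ (ne_of_gt hr₀)
      rw [hμr₀] at h
      have hlamμ : lam ≤ μ := by
        rw [hμdef, le_div_iff₀ hr₀]; nlinarith
      have hmono : lam ^ (2*b) ≤ μ ^ (2*b) :=
        Real.rpow_le_rpow hlam.le hlamμ (by positivity)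
      have hfur₀ : fu r₀ ≤ fu 0 := hfumono 0 r₀ le_rfl hr₀.le hr₀RX
      have hfur₀pos : 0 < fu r₀ := lt_of_lt_of_le one_pos (hfu1 r₀ hr₀.le hr₀RX)
      have hgr₀ : c₁ ≤ g r₀ := by
        rw [hg, hc₁]
        gcongr
      have hgr₀0 : 0 ≤ g r₀ := (hgmem r₀ hr₀.le hr₀RX).1
      calc c₁ * lam ^ (2*b) * g r ≤ c₁ * lam ^ (2*b) * 1 := by
            exact mul_le_mul_of_nonneg_left hgrmem.2
              (mul_nonneg hc₁pos.le hl2b_nonneg)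
        _ = c₁ * lam ^ (2*b) := by ring
        _ ≤ g r₀ * μ ^ (2*b) := mul_le_mul hgr₀ hmono hl2b_nonneg hgr₀0
        _ = μ ^ (2*b) * g r₀ := by ring
        _ ≤ g (lam * r) := h
    · have hflmono' : fl r₀ ≤ fl (lam*r) := hflmono r₀ (lam*r) hr₀.le hcase2.le hlrRX
      have hfu' : fu (lam*r) ≤ fu 0 := hfumono 0 (lam*r) le_rfl hlr0 hlrRX
      have hfupos' : 0 < fu (lam*r) := lt_of_lt_of_le one_pos (hfu1 _ hlr0 hlrRX)
      have hc : c₁ ≤ g (lam*r) := by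
        rw [hg, hc₁]
        gcongr
        exact (hfl01 _ hlr0 hlrRX).1
      nlinarith [hgrmem.1, hgrmem.2, mul_nonneg hl2b_nonneg hgrmem.1,
        mul_le_one₀ hl2b_le1 hgrmem.1 hgrmem.2]
end

section
/- Let (X,d) be a metric space and μ a Borel measure on X. Let 0 < R_X ≤ ∞, let V : [0,R_X) → [0,∞) be increasing with V(r) > 0 for r > 0 and with V(Λρ) ≤ C_u·Λ^{β_u}·V(ρ) whenever Λ ≥ 1 and Λρ < R_X (where C_u ≥ 1, β_u > 0). Let f_l : [0,R_X) → [0,1] be increasing with f_l(r) > 0 for r > 0 and f_l(λρ) ≥ c_a·λ^b·f_l(ρ) for all λ ∈ (0,1], ρ ∈ [0,R_X), and let f_u : [0,R_X) → [1,∞) be decreasing with f_u(λρ) ≤ c_b·λ^{-b}·f_u(ρ) for all λ ∈ (0,1], ρ ∈ [0,R_X) (where b, c_a, c_b > 0). Suppose f_l(ρ)·V(ρ) ≤ μ(B(y,ρ)) ≤ f_u(ρ)·V(ρ) < ∞ for every y ∈ X and ρ ∈ [0,R_X). Set g := f_l/f_u. Then for every fixed ε ∈ (0,1/2] there exists a constant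 c₁ > 0 (depending on ε, b, c_a, c_b, C_u, β_u) such that for every x ∈ X and every r ∈ (0, R_X/2) there exist points y₁, …, y_m ∈ B(x,r) with m ≤ c₁·g(r)^{-1} and B(x,r) ⊆ ⋃_{i=1}^m B(y_i, ε·r). -/
open Set MeasureTheory Metric ENNReal
open scoped NNReal

/-! A maximal `(εr/2)`-separated subset of `B(x,r)` is an `εr`-net of it. The balls of radius
`εr/4` around its points are disjoint and lie in `B(x,2r)`, so their number is at most the upper
volume bound of `B(x,2r)` divided by the lower volume bound of a ball of radius `εr/4`. Doubling of
`V` and the scaling of `f_l` and monotonicity of `f_u` bound this ratio by a constant times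
`f_u(r)/f_l(r) = g(r)⁻¹`. -/

theorem MeasureTheory.Measure.card_mul_le_measure_biUnion {X : Type*} [PseudoMetricSpace X]
    [MeasurableSpace X] [OpensMeasurableSpace X] (μ : Measure X) {T : Finset X} {ρ : ℝ}
    (hT : (T : Set X).PairwiseDisjoint (ball · ρ)) {a : ℝ≥0∞} (ha : ∀ t ∈ T, a ≤ μ (ball t ρ)) :
    T.card * a ≤ μ (⋃ t ∈ T, ball t ρ) := by
  rw [measure_biUnion_finset hT fun _ _ => measurableSet_ball, ← nsmul_eq_mul, ← Finset.sum_const]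
  exact Finset.sum_le_sum ha

namespace Metric

variable {X : Type*} [PseudoMetricSpace X]

theorem IsSeparated.pairwiseDisjoint_ball {ε : ℝ≥0∞} {s : Set X} (hs : IsSeparated ε s)
    {ρ : ℝ} (hρ : ENNReal.ofReal (2 * ρ) ≤ ε) : s.PairwiseDisjoint (ball · ρ) := by
  intro x hx y hy hxy
  refine ball_disjoint_ball ?_
  have : ENNReal.ofReal (2 * ρ) < ENNReal.ofReal (dist x y) := by
    rw [← edist_dist]; exact hρ.trans_lt (hs hx hy hxy)
  linarith [(ENNReal.ofReal_lt_ofReal_iff'.1 this).1]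

theorem packingNumber_le_of_forall_finset_card_le {ε : ℝ≥0} {A : Set X} {N : ℕ}
    (h : ∀ T : Finset X, ↑T ⊆ A → IsSeparated ε (T : Set X) → T.card ≤ N) :
    packingNumber ε A ≤ N := by
  refine iSup₂_le fun C hCA => iSup_le fun hC => ?_
  by_contra! hlt
  obtain ⟨T, hTC, hTcard⟩ := exists_subset_encard_eq (Order.add_one_le_of_lt hlt)
  have hTfin : T.Finite := finite_of_encard_eq_coe hTcard
  have := h hTfin.toFinset (by simpa using hTC.trans hCA) (by simpa using hC.subset hTC)
  rw [hTfin.encard_eq_coe_toFinset_card] at hTcard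
  norm_cast at hTcard
  omega

theorem exists_cover_of_forall_isSeparated_card_le {ε : ℝ≥0} {δ : ℝ} {A : Set X} {c : ℝ}
    (h : ∀ T : Finset X, ↑T ⊆ A → IsSeparated ε (T : Set X) → (T.card : ℝ) ≤ c)
    (hεδ : (ε : ℝ) < δ) :
    ∃ (m : ℕ) (y : Fin m → X), (∀ i, y i ∈ A) ∧ (m : ℝ) ≤ c ∧ A ⊆ ⋃ i, ball (y i) δ := by
  have hfinite : packingNumber ε A ≠ ⊤ :=
    ne_top_of_le_ne_top (ENat.natCast_ne_top ⌊c⌋₊) <| packingNumber_le_of_forall_finset_card_le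
      fun T hTA hT => Nat.le_floor (h T hTA hT)
  have hfin : (maximalSeparatedSet ε A).Finite := by
    rw [← encard_ne_top_iff, encard_maximalSeparatedSet hfinite]; exact hfinite
  set T := hfin.toFinset
  refine ⟨T.card, fun i => T.equivFin.symm i, fun i => ?_,
    h T (by simpa [T] using maximalSeparatedSet_subset)
      (by simpa [T] using isSeparated_maximalSeparatedSet), fun x hx => ?_⟩
  · exact maximalSeparatedSet_subset ((Set.Finite.mem_toFinset hfin).1 (T.equivFin.symm i).2)
  · obtain ⟨t, ht, hxt⟩ :=
      mem_iUnion₂.1 <| (isCover_maximalSeparatedSet hfinite).subset_iUnion_closedBall hx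
    refine mem_iUnion.2 ⟨T.equivFin ⟨t, (Set.Finite.mem_toFinset hfin).2 ht⟩, ?_⟩
    simpa using (mem_closedBall.1 hxt).trans_lt hεδ

theorem IsSeparated.card_le_div [MeasurableSpace X] [OpensMeasurableSpace X] (μ : Measure X)
    {ε : ℝ≥0∞} {T : Finset X} (hT : IsSeparated ε (T : Set X)) {x : X} {r ρ L U : ℝ}
    (hρ : ENNReal.ofReal (2 * ρ) ≤ ε) (hTx : ↑T ⊆ ball x r) (hL : 0 < L) (hU : 0 ≤ U)
    (hlow : ∀ t ∈ T, ENNReal.ofReal L ≤ μ (ball t ρ))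
    (hup : μ (ball x (r + ρ)) ≤ ENNReal.ofReal U) :
    (T.card : ℝ) ≤ U / L := by
  have hunion : ⋃ t ∈ T, ball t ρ ⊆ ball x (r + ρ) := iUnion₂_subset fun t ht =>
    (ball_subset_ball' le_rfl).trans <| ball_subset_ball <| by linarith [mem_ball.1 (hTx ht)]
  have : ENNReal.ofReal (T.card * L) ≤ ENNReal.ofReal U := calc
    ENNReal.ofReal (T.card * L) = T.card * ENNReal.ofReal L := by
      rw [ENNReal.ofReal_mul (Nat.cast_nonneg _), ENNReal.ofReal_natCast]
    _ ≤ μ (⋃ t ∈ T, ball t ρ) := μ.card_mul_le_measure_biUnion (hT.pairwiseDisjoint_ball hρ) hlow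
    _ ≤ ENNReal.ofReal U := (measure_mono hunion).trans hup
  rw [le_div_iff₀ hL]
  exact (ENNReal.ofReal_le_ofReal_iff hU).1 this

end Metric

theorem volume_ratio_le {V fl fu : ℝ → ℝ} {r ρ R K k : ℝ} (hk : 0 < k) (hflr : 0 < fl r)
    (hfur : 0 ≤ fu r) (hVR : 0 ≤ V R) (hVρ : 0 < V ρ) (hV : V R ≤ K * V ρ)
    (hfl : k * fl r ≤ fl ρ) (hfu : fu R ≤ fu r) :
    fu R * V R / (fl ρ * V ρ) ≤ K / k * (fu r / fl r) := by
  have hflρ : 0 < fl ρ := by nlinarith [mul_pos hk hflr]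
  have hK : 0 ≤ K := nonneg_of_mul_nonneg_left (hVR.trans hV) hVρ
  rw [div_le_iff₀ (by positivity)]
  calc fu R * V R ≤ fu r * (K * V ρ) := mul_le_mul hfu hV hVR hfur
    _ = K / k * (fu r / fl r) * ((k * fl r) * V ρ) := by field_simp
    _ ≤ K / k * (fu r / fl r) * (fl ρ * V ρ) := by gcongr

theorem covering_lemma_general
    {X : Type*} [MetricSpace X] [MeasurableSpace X] [BorelSpace X]
    (μ : Measure X)
    (RX : ℝ≥0∞)
    (V fl fu : ℝ → ℝ)
    (Cu βu : ℝ) (hCu : 1 ≤ Cu)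
    (hVpos : ∀ r : ℝ, 0 < r → ENNReal.ofReal r < RX → 0 < V r)
    (hVdoub : ∀ Λ ρ : ℝ, 1 ≤ Λ → 0 ≤ ρ → ENNReal.ofReal (Λ * ρ) < RX →
      V (Λ * ρ) ≤ Cu * Λ ^ βu * V ρ)
    (b ca : ℝ) (hca : 0 < ca)
    (hflpos : ∀ r : ℝ, 0 < r → ENNReal.ofReal r < RX → 0 < fl r)
    (hflscale : ∀ lam ρ : ℝ, 0 < lam → lam ≤ 1 → 0 ≤ ρ → ENNReal.ofReal ρ < RX →
      ca * lam ^ b * fl ρ ≤ fl (lam * ρ))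
    (hfu1 : ∀ r : ℝ, 0 ≤ r → ENNReal.ofReal r < RX → 1 ≤ fu r)
    (hfumono : ∀ r s : ℝ, 0 ≤ r → r ≤ s → ENNReal.ofReal s < RX → fu s ≤ fu r)
    (hvol : ∀ (y : X) (ρ : ℝ), 0 ≤ ρ → ENNReal.ofReal ρ < RX →
      ENNReal.ofReal (fl ρ * V ρ) ≤ μ (Metric.ball y ρ) ∧
        μ (Metric.ball y ρ) ≤ ENNReal.ofReal (fu ρ * V ρ))
    (g : ℝ → ℝ) (hg : ∀ r : ℝ, g r = fl r / fu r)
    (ε : ℝ) (hε : 0 < ε) (hε' : ε ≤ 1 / 2) :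
    ∃ c₁ : ℝ, 0 < c₁ ∧ ∀ (x : X) (r : ℝ), 0 < r → ENNReal.ofReal r < RX / 2 →
      ∃ (m : ℕ) (y : Fin m → X),
        (∀ i, y i ∈ Metric.ball x r) ∧
        (m : ℝ) ≤ c₁ * (g r)⁻¹ ∧
        Metric.ball x r ⊆ ⋃ i, Metric.ball (y i) (ε * r) := by
  refine ⟨Cu * (8 / ε) ^ βu / (ca * (ε / 4) ^ b), by positivity, fun x r hr hr2 => ?_⟩
  have h2r : ENNReal.ofReal (2 * r) < RX := by
    rwa [ENNReal.ofReal_mul zero_le_two, ENNReal.ofReal_ofNat, mul_comm,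
      ← ENNReal.lt_div_iff_mul_lt (by simp) (by simp)]
  have hr' : ENNReal.ofReal r < RX := (ofReal_le_ofReal (by linarith)).trans_lt h2r
  have hρ : ENNReal.ofReal (ε / 4 * r) < RX := (ofReal_le_ofReal (by nlinarith)).trans_lt hr'
  have hR : 8 / ε * (ε / 4 * r) = 2 * r := by field_simp; ring
  have hVR := hVdoub (8 / ε) (ε / 4 * r) (by rw [le_div_iff₀ hε]; linarith) (by positivity)
    (hR ▸ h2r)
  rw [hR] at hVR
  refine exists_cover_of_forall_isSeparated_card_le (ε := (ε * r / 2).toNNReal)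
    (fun T hTx hT => ?_)
    (by rw [Real.coe_toNNReal _ (by positivity)]; exact half_lt_self (by positivity))
  calc (T.card : ℝ) ≤ fu (2 * r) * V (2 * r) / (fl (ε / 4 * r) * V (ε / 4 * r)) :=
        hT.card_le_div μ (ρ := ε / 4 * r) (ofReal_le_ofReal (by linarith)) hTx
          (mul_pos (hflpos _ (by positivity) hρ) (hVpos _ (by positivity) hρ))
          (mul_nonneg (zero_le_one.trans (hfu1 _ (by positivity) h2r))
            (hVpos _ (by positivity) h2r).le)
          (fun t _ => (hvol t _ (by positivity) hρ).1)
          ((measure_mono (ball_subset_ball (by nlinarith))).trans (hvol x _ (by positivity) h2r).2)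
    _ ≤ Cu * (8 / ε) ^ βu / (ca * (ε / 4) ^ b) * (fu r / fl r) :=
        volume_ratio_le (by positivity) (hflpos r hr hr') (zero_le_one.trans (hfu1 r hr.le hr'))
          (hVpos _ (by positivity) h2r).le (hVpos _ (by positivity) hρ) hVR
          (hflscale _ r (by positivity) (by linarith) hr.le hr')
          (hfumono r _ hr.le (by linarith) h2r)
    _ = _ := by rw [hg, inv_div]

/-- Covering lemma: under the stated volume growth with fluctuations `f_l`, `f_u`
(and their scaling inequalities), for each fixed `ε ∈ (0,1/2]` there is a constant
`c₁ > 0` such that every ball `B(x,r)`, `0 < r < R_X/2`, can be covered by at most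
`c₁ · g(r)⁻¹` balls of radius `ε·r` with centres in `B(x,r)`, where `g := f_l/f_u`. -/
theorem covering_lemma
    {X : Type*} [MetricSpace X] [MeasurableSpace X] [BorelSpace X]
    (μ : Measure X)
    (RX : ℝ≥0∞) (hRX : 0 < RX)
    (V fl fu : ℝ → ℝ)
    (Cu βu : ℝ) (hCu : 1 ≤ Cu) (hβu : 0 < βu)
    (hVnonneg : ∀ r : ℝ, 0 ≤ r → ENNReal.ofReal r < RX → 0 ≤ V r)
    (hVpos : ∀ r : ℝ, 0 < r → ENNReal.ofReal r < RX → 0 < V r)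
    (hVmono : ∀ r s : ℝ, 0 ≤ r → r ≤ s → ENNReal.ofReal s < RX → V r ≤ V s)
    (hVdoub : ∀ Λ ρ : ℝ, 1 ≤ Λ → 0 ≤ ρ → ENNReal.ofReal (Λ * ρ) < RX →
      V (Λ * ρ) ≤ Cu * Λ ^ βu * V ρ)
    (b ca cb : ℝ) (hb : 0 < b) (hca : 0 < ca) (hcb : 0 < cb)
    (hfl01 : ∀ r : ℝ, 0 ≤ r → ENNReal.ofReal r < RX → fl r ∈ Set.Icc (0 : ℝ) 1)
    (hflpos : ∀ r : ℝ, 0 < r → ENNReal.ofReal r < RX → 0 < fl r)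
    (hflmono : ∀ r s : ℝ, 0 ≤ r → r ≤ s → ENNReal.ofReal s < RX → fl r ≤ fl s)
    (hflscale : ∀ lam ρ : ℝ, 0 < lam → lam ≤ 1 → 0 ≤ ρ → ENNReal.ofReal ρ < RX →
      ca * lam ^ b * fl ρ ≤ fl (lam * ρ))
    (hfu1 : ∀ r : ℝ, 0 ≤ r → ENNReal.ofReal r < RX → 1 ≤ fu r)
    (hfumono : ∀ r s : ℝ, 0 ≤ r → r ≤ s → ENNReal.ofReal s < RX → fu s ≤ fu r)
    (hfuscale : ∀ lam ρ : ℝ, 0 < lam → lam ≤ 1 → 0 ≤ ρ → ENNReal.ofReal ρ < RX →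
      fu (lam * ρ) ≤ cb * lam ^ (-b) * fu ρ)
    (hvol : ∀ (y : X) (ρ : ℝ), 0 ≤ ρ → ENNReal.ofReal ρ < RX →
      ENNReal.ofReal (fl ρ * V ρ) ≤ μ (Metric.ball y ρ) ∧
        μ (Metric.ball y ρ) ≤ ENNReal.ofReal (fu ρ * V ρ))
    (g : ℝ → ℝ) (hg : ∀ r : ℝ, g r = fl r / fu r)
    (ε : ℝ) (hε : 0 < ε) (hε' : ε ≤ 1 / 2) :
    ∃ c₁ : ℝ, 0 < c₁ ∧ ∀ (x : X) (r : ℝ), 0 < r → ENNReal.ofReal r < RX / 2 →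
      ∃ (m : ℕ) (y : Fin m → X),
        (∀ i, y i ∈ Metric.ball x r) ∧
        (m : ℝ) ≤ c₁ * (g r)⁻¹ ∧
        Metric.ball x r ⊆ ⋃ i, Metric.ball (y i) (ε * r) :=
  covering_lemma_general μ RX V fl fu Cu βu hCu hVpos hVdoub b ca hca hflpos hflscale hfu1 hfumono
    hvol g hg ε hε hε'
end

section
/- Let 0 < R_X ≤ ∞ and let V : [0,R_X) → [0,∞) be increasing with V(r) > 0 for r > 0 and with V(Λρ) ≤ C_u·Λ^{β_u}·V(ρ) whenever Λ ≥ 1 and Λρ < R_X (where C_u ≥ 1, β_u > 0). Let f_l : [0,R_X) → [0,1] be increasing with f_l(r) > 0 for r > 0 and f_l(λρ) ≥ c_a·λ^b·f_l(ρ) for all λ ∈ (0,1], ρ ∈ [0,R_X), and let f_u : [0,R_X) → [1,∞) be decreasing with f_u(λρ) ≤ c_b·λ^{-b}·f_u(ρ) for all λ ∈ (0,1], ρ ∈ [0,R_X) (where b, c_a, c_b > 0). Set g := f_l/f_u and V_u := f_u·V. Let γ₁, γ₂ > 0 and set θ₁ := 2γ₁ + γ₂·(β_u + 4bγ₁). Then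 there exists a constant c > 0 such that for every r ∈ (0,R_X): V_u(r·g(r)^{γ₂})·g(r·g(r)^{γ₂})^{2γ₁} ≥ c·g(r)^{θ₁}·V_u(r). -/
open Set ENNReal

/-- Under the stated scaling inequalities for `V`, `f_l`, `f_u`, with `g := f_l/f_u`,
`V_u := f_u·V`, and `θ₁ := 2γ₁ + γ₂·(β_u + 4bγ₁)`, there exists a constant `c > 0`
such that `V_u(r·g(r)^{γ₂})·g(r·g(r)^{γ₂})^{2γ₁} ≥ c·g(r)^{θ₁}·V_u(r)` for every
`r ∈ (0,R_X)`. -/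
theorem theta_one_inequality
    (RX : ℝ≥0∞) (hRX : 0 < RX)
    (V fl fu : ℝ → ℝ)
    (Cu βu : ℝ) (hCu : 1 ≤ Cu) (hβu : 0 < βu)
    (hVnonneg : ∀ r : ℝ, 0 ≤ r → ENNReal.ofReal r < RX → 0 ≤ V r)
    (hVpos : ∀ r : ℝ, 0 < r → ENNReal.ofReal r < RX → 0 < V r)
    (hVmono : ∀ r s : ℝ, 0 ≤ r → r ≤ s → ENNReal.ofReal s < RX → V r ≤ V s)
    (hVdoub : ∀ Λ ρ : ℝ, 1 ≤ Λ → 0 ≤ ρ → ENNReal.ofReal (Λ * ρ) < RX →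
      V (Λ * ρ) ≤ Cu * Λ ^ βu * V ρ)
    (b ca cb : ℝ) (hb : 0 < b) (hca : 0 < ca) (hcb : 0 < cb)
    (hfl01 : ∀ r : ℝ, 0 ≤ r → ENNReal.ofReal r < RX → fl r ∈ Set.Icc (0 : ℝ) 1)
    (hflpos : ∀ r : ℝ, 0 < r → ENNReal.ofReal r < RX → 0 < fl r)
    (hflmono : ∀ r s : ℝ, 0 ≤ r → r ≤ s → ENNReal.ofReal s < RX → fl r ≤ fl s)
    (hflscale : ∀ lam ρ : ℝ, 0 < lam → lam ≤ 1 → 0 ≤ ρ → ENNReal.ofReal ρ < RX →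
      ca * lam ^ b * fl ρ ≤ fl (lam * ρ))
    (hfu1 : ∀ r : ℝ, 0 ≤ r → ENNReal.ofReal r < RX → 1 ≤ fu r)
    (hfumono : ∀ r s : ℝ, 0 ≤ r → r ≤ s → ENNReal.ofReal s < RX → fu s ≤ fu r)
    (hfuscale : ∀ lam ρ : ℝ, 0 < lam → lam ≤ 1 → 0 ≤ ρ → ENNReal.ofReal ρ < RX →
      fu (lam * ρ) ≤ cb * lam ^ (-b) * fu ρ)
    (g Vu : ℝ → ℝ)
    (hg : ∀ r : ℝ, g r = fl r / fu r)
    (hVu : ∀ r : ℝ, Vu r = fu r * V r)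
    (γ₁ γ₂ θ₁ : ℝ) (hγ₁ : 0 < γ₁) (hγ₂ : 0 < γ₂)
    (hθ₁ : θ₁ = 2 * γ₁ + γ₂ * (βu + 4 * b * γ₁)) :
    ∃ c : ℝ, 0 < c ∧ ∀ r : ℝ, 0 < r → ENNReal.ofReal r < RX →
      c * g r ^ θ₁ * Vu r ≤
        Vu (r * g r ^ γ₂) * g (r * g r ^ γ₂) ^ (2 * γ₁) := by
  refine ⟨Cu⁻¹ * (ca / cb) ^ (2 * γ₁), by positivity, ?_⟩
  intro r hr hrRX
  have hr0 : (0:ℝ) ≤ r := hr.le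
  -- basic facts about g r
  have hfur : 1 ≤ fu r := hfu1 r hr0 hrRX
  have hfur0 : 0 < fu r := lt_of_lt_of_le one_pos hfur
  have hflr : 0 < fl r := hflpos r hr hrRX
  have hgr0 : 0 < g r := by rw [hg]; positivity
  have hgr1 : g r ≤ 1 := by
    rw [hg]
    exact div_le_one_of_le₀ ((hfl01 r hr0 hrRX).2.trans hfur) hfur0.le
  set lam : ℝ := g r ^ γ₂ with hlam
  have hlam0 : 0 < lam := Real.rpow_pos_of_pos hgr0 _
  have hlam1 : lam ≤ 1 := Real.rpow_le_one hgr0.le hgr1 hγ₂.le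
  set s : ℝ := r * lam with hs
  have hs0 : 0 < s := mul_pos hr hlam0
  have hsr : s ≤ r := mul_le_of_le_one_right hr0 hlam1
  have hsRX : ENNReal.ofReal s < RX :=
    lt_of_le_of_lt (ENNReal.ofReal_le_ofReal hsr) hrRX
  have hsl : s = lam * r := mul_comm r lam
  -- volume lower bound: V s ≥ Cu⁻¹ * lam^βu * V r
  have hVr : V r ≤ Cu * lam⁻¹ ^ βu * V s := by
    have h1 : (1:ℝ) ≤ lam⁻¹ := (one_le_inv₀ hlam0).2 hlam1
    have := hVdoub lam⁻¹ s h1 hs0.le (by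
      rw [hs]; field_simp; exact hrRX)
    rwa [hs, show lam⁻¹ * (r * lam) = r by field_simp] at this
  have hVs : Cu⁻¹ * lam ^ βu * V r ≤ V s := by
    have hCu0 : (0:ℝ) < Cu := lt_of_lt_of_le one_pos hCu
    rw [Real.inv_rpow hlam0.le] at hVr
    have hlp : 0 < lam ^ βu := Real.rpow_pos_of_pos hlam0 _
    have h2 := mul_le_mul_of_nonneg_left hVr
      (by positivity : (0:ℝ) ≤ Cu⁻¹ * lam ^ βu)
    have h3 : Cu⁻¹ * lam ^ βu * (Cu * (lam ^ βu)⁻¹ * V s) = V s := by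
      field_simp
    linarith
  -- fu s ≥ fu r
  have hfus : fu r ≤ fu s := hfumono s r hs0.le hsr hrRX
  have hfus0 : 0 < fu s := lt_of_lt_of_le hfur0 hfus
  -- g s lower bound
  have hfls : ca * lam ^ b * fl r ≤ fl s := by
    rw [hsl]; exact hflscale lam r hlam0 hlam1 hr0 hrRX
  have hfusu : fu s ≤ cb * lam ^ (-b) * fu r := by
    rw [hsl]; exact hfuscale lam r hlam0 hlam1 hr0 hrRX
  have hgs : (ca / cb) * lam ^ (2 * b) * g r ≤ g s := by
    rw [hg s, hg r]
    have h1 : ca * lam ^ b * fl r / (cb * lam ^ (-b) * fu r) ≤ fl s / fu s := by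
      apply div_le_div₀ (hfl01 s hs0.le hsRX).1 hfls hfus0 hfusu
    refine le_trans (le_of_eq ?_) h1
    rw [Real.rpow_neg hlam0.le]
    have hlb : 0 < lam ^ b := Real.rpow_pos_of_pos hlam0 _
    rw [show (2:ℝ) * b = b + b by ring, Real.rpow_add hlam0]
    field_simp
  have hgs0 : (0:ℝ) ≤ g s := le_trans (by positivity) hgs
  -- raise to power 2γ₁
  have hgs2 : ((ca / cb) * lam ^ (2 * b) * g r) ^ (2 * γ₁) ≤ g s ^ (2 * γ₁) :=
    Real.rpow_le_rpow (by positivity) hgs (by positivity)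
  have hexp : ((ca / cb) * lam ^ (2 * b) * g r) ^ (2 * γ₁)
      = (ca / cb) ^ (2 * γ₁) * lam ^ (2 * b * (2 * γ₁)) * g r ^ (2 * γ₁) := by
    rw [Real.mul_rpow (by positivity) hgr0.le,
      Real.mul_rpow (by positivity) (by positivity),
      ← Real.rpow_mul hlam0.le]
  -- Vu bound
  have hVus : Cu⁻¹ * lam ^ βu * Vu r ≤ Vu s := by
    rw [hVu s, hVu r]
    have hVr0 : 0 ≤ V r := hVnonneg r hr0 hrRX
    have hVs0 : 0 ≤ V s := hVnonneg s hs0.le hsRX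
    calc Cu⁻¹ * lam ^ βu * (fu r * V r)
        = fu r * (Cu⁻¹ * lam ^ βu * V r) := by ring
      _ ≤ fu r * V s := by
          exact mul_le_mul_of_nonneg_left hVs hfur0.le
      _ ≤ fu s * V s := mul_le_mul_of_nonneg_right hfus hVs0
  -- combine
  have hVus0 : 0 ≤ Vu s := by
    rw [hVu s]; exact mul_nonneg hfus0.le (hVnonneg s hs0.le hsRX)
  have key : (Cu⁻¹ * lam ^ βu * Vu r) *
      ((ca / cb) ^ (2 * γ₁) * lam ^ (2 * b * (2 * γ₁)) * g r ^ (2 * γ₁))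
      ≤ Vu s * g s ^ (2 * γ₁) := by
    apply mul_le_mul hVus (le_trans (le_of_eq hexp.symm) hgs2) (by positivity)
      hVus0
  refine le_trans (le_of_eq ?_) key
  have hVur0 : 0 ≤ Vu r := by
    rw [hVu r]; exact mul_nonneg hfur0.le (hVnonneg r hr0 hrRX)
  rw [hlam, ← Real.rpow_mul hgr0.le, ← Real.rpow_mul hgr0.le, hθ₁,
    show 2 * γ₁ + γ₂ * (βu + 4 * b * γ₁)
      = (γ₂ * βu + γ₂ * (2 * b * (2 * γ₁))) + 2 * γ₁ by ring,
    Real.rpow_add hgr0, Real.rpow_add hgr0]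
  ring
end
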